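/- Consequence of the recursion structure: the matrices X⁽¹⁾ defined by the truncated recursion with N sidebands are independent of N for all N ≥ 2. Precisely, if Xₙ⁽¹⁾ denotes the matrix obtained from the recursion X⁽ᵏ⁾ = (cₖI − A_d − A₊X⁽ᵏ⁺¹⁾A₋)⁻¹ with boundary X⁽ᴺ⁾ = (c_N I − A_d)⁻¹, and the sequence cₖ is fixed, then the first diagonal 2×2 block of every Xₙ⁽ᵏ⁾ equals (cₖ I₂ − A_d1)⁻¹ independently of N, and hence Ξ⁽¹⁾ = A₊X⁽¹⁾A₋ computed with N sidebands equals that computed with 2 sidebands, for every N ≥ 2. -/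

import Mathlib

open Matrix

/-- A 6×6 matrix built from a 3×3 array of 2×2 blocks. -/
def mk3 (f : Fin 3 → Fin 3 → Matrix (Fin 2) (Fin 2) ℂ) :
    Matrix (Fin 3 × Fin 2) (Fin 3 × Fin 2) ℂ :=
  fun p q => f p.1 q.1 p.2 q.2

/-- The (i,j) 2×2 block of a 6×6 matrix. -/
def blk (i j : Fin 3) (M : Matrix (Fin 3 × Fin 2) (Fin 3 × Fin 2) ℂ) :
    Matrix (Fin 2) (Fin 2) ℂ :=
  fun a b => M (i, a) (j, b)

/-- Block diagonal 6×6 matrix with 2×2 blocks. -/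
def bd3 (D₁ D₂ D₃ : Matrix (Fin 2) (Fin 2) ℂ) :
    Matrix (Fin 3 × Fin 2) (Fin 3 × Fin 2) ℂ :=
  mk3 (fun i j => if i = j then (if i = 0 then D₁ else if i = 1 then D₂ else D₃) else 0)

/-- A₊ = [[0,0,0],[0,0,Q_cm],[Q_ma,0,0]] in 2×2 blocks. -/
def Aplus (Qcm Qma : Matrix (Fin 2) (Fin 2) ℂ) :
    Matrix (Fin 3 × Fin 2) (Fin 3 × Fin 2) ℂ :=
  mk3 (fun i j => if i = 1 ∧ j = 2 then Qcm else if i = 2 ∧ j = 0 then Qma else 0)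

/-- A₋ = [[0,0,Q_am],[0,0,0],[0,Q_mc,0]] in 2×2 blocks. -/
def Aminus (Qam Qmc : Matrix (Fin 2) (Fin 2) ℂ) :
    Matrix (Fin 3 × Fin 2) (Fin 3 × Fin 2) ℂ :=
  mk3 (fun i j => if i = 0 ∧ j = 2 then Qam else if i = 2 ∧ j = 1 then Qmc else 0)

/-- Block diagonality (2×2 blocks) of a 6×6 matrix. -/
def IsBD (M : Matrix (Fin 3 × Fin 2) (Fin 3 × Fin 2) ℂ) : Prop :=
  ∀ p q : Fin 3 × Fin 2, p.1 ≠ q.1 → M p q = 0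

/-!
For block-diagonal `Z = diag(Z₁, Z₂, Z₃)` the coupling term is
`A₊ Z A₋ = diag(0, Q_cm Z₃ Q_mc, Q_ma Z₁ Q_am)`. Starting from the block-diagonal boundary
term, downward induction shows that every `X⁽ᵏ⁾` is block diagonal; since the first block of
the coupling vanishes, its first block is `(cₖ − A_d1)⁻¹` and its third block is
`(cₖ − A_d3 − Q_ma (cₖ₊₁ − A_d1)⁻¹ Q_am)⁻¹`. Hence `A₊ X⁽¹⁾ A₋` only involves `c₁` and `c₂`.
-/

lemma blk_eq_comp_symm (i j : Fin 3) (M : Matrix (Fin 3 × Fin 2) (Fin 3 × Fin 2) ℂ) :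
    blk i j M = (compRingEquiv (Fin 3) (Fin 2) ℂ).symm M i j := rfl

lemma blk_ext {M M' : Matrix (Fin 3 × Fin 2) (Fin 3 × Fin 2) ℂ}
    (h : ∀ i j, blk i j M = blk i j M') : M = M' :=
  (compRingEquiv (Fin 3) (Fin 2) ℂ).symm.injective (Matrix.ext fun i j => h i j)

lemma blk_mul (i j : Fin 3) (M M' : Matrix (Fin 3 × Fin 2) (Fin 3 × Fin 2) ℂ) :
    blk i j (M * M') = ∑ k, blk i k M * blk k j M' := by
  simp only [blk_eq_comp_symm, map_mul, Matrix.mul_apply]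

lemma blk_one (i j : Fin 3) :
    blk i j (1 : Matrix (Fin 3 × Fin 2) (Fin 3 × Fin 2) ℂ) = if i = j then 1 else 0 := by
  simp only [blk_eq_comp_symm, map_one, Matrix.one_apply]

lemma blk_mk3 (i j : Fin 3) (f : Fin 3 → Fin 3 → Matrix (Fin 2) (Fin 2) ℂ) :
    blk i j (mk3 f) = f i j := rfl

lemma blk_bd3 (i j : Fin 3) (D₁ D₂ D₃ : Matrix (Fin 2) (Fin 2) ℂ) :
    blk i j (bd3 D₁ D₂ D₃) =
      if i = j then (if i = 0 then D₁ else if i = 1 then D₂ else D₃) else 0 := rfl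

lemma bd3_mul_bd3 (D₁ D₂ D₃ E₁ E₂ E₃ : Matrix (Fin 2) (Fin 2) ℂ) :
    bd3 D₁ D₂ D₃ * bd3 E₁ E₂ E₃ = bd3 (D₁ * E₁) (D₂ * E₂) (D₃ * E₃) := by
  refine blk_ext fun i j => ?_
  fin_cases i <;> fin_cases j <;> simp [blk_mul, blk_bd3]

lemma bd3_add_bd3 (D₁ D₂ D₃ E₁ E₂ E₃ : Matrix (Fin 2) (Fin 2) ℂ) :
    bd3 D₁ D₂ D₃ + bd3 E₁ E₂ E₃ = bd3 (D₁ + E₁) (D₂ + E₂) (D₃ + E₃) := by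
  ext ⟨i, a⟩ ⟨j, b⟩
  fin_cases i <;> fin_cases j <;> simp [bd3, mk3]

lemma smul_one_sub_bd3 (c : ℂ) (D₁ D₂ D₃ : Matrix (Fin 2) (Fin 2) ℂ) :
    c • (1 : Matrix (Fin 3 × Fin 2) (Fin 3 × Fin 2) ℂ) - bd3 D₁ D₂ D₃
      = bd3 (c • 1 - D₁) (c • 1 - D₂) (c • 1 - D₃) := by
  ext ⟨i, a⟩ ⟨j, b⟩
  fin_cases i <;> fin_cases j <;> simp [bd3, mk3, Matrix.one_apply]

lemma Aplus_mul_bd3_mul_Aminus (Qcm Qma Qam Qmc B₁ B₂ B₃ : Matrix (Fin 2) (Fin 2) ℂ) :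
    Aplus Qcm Qma * bd3 B₁ B₂ B₃ * Aminus Qam Qmc
      = bd3 0 (Qcm * B₃ * Qmc) (Qma * B₁ * Qam) := by
  refine blk_ext fun i j => ?_
  fin_cases i <;> fin_cases j <;>
    simp [blk_mul, blk_bd3, blk_mk3, Aplus, Aminus, Matrix.mul_assoc]

lemma isUnit_of_isUnit_bd3 {D₁ D₂ D₃ : Matrix (Fin 2) (Fin 2) ℂ} (h : IsUnit (bd3 D₁ D₂ D₃)) :
    IsUnit D₁ ∧ IsUnit D₂ ∧ IsUnit D₃ := by
  obtain ⟨u, hu⟩ := h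
  have hblk : ∀ i : Fin 3, blk i i (bd3 D₁ D₂ D₃) * blk i i ↑u⁻¹ = 1 := fun i => by
    have := congrArg (blk i i) u.mul_inv
    fin_cases i <;> simpa [hu, blk_mul, blk_one, blk_bd3, Fin.sum_univ_three] using this
  exact ⟨IsUnit.of_mul_eq_one _ (hblk 0), IsUnit.of_mul_eq_one _ (hblk 1),
    IsUnit.of_mul_eq_one _ (hblk 2)⟩

lemma bd3_one : bd3 1 1 1 = 1 := by
  refine blk_ext fun i j => ?_
  fin_cases i <;> fin_cases j <;> simp [blk_one, blk_bd3]

lemma inv_bd3 {D₁ D₂ D₃ : Matrix (Fin 2) (Fin 2) ℂ} (h : IsUnit (bd3 D₁ D₂ D₃)) :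
    (bd3 D₁ D₂ D₃)⁻¹ = bd3 D₁⁻¹ D₂⁻¹ D₃⁻¹ := by
  obtain ⟨h₁, h₂, h₃⟩ := isUnit_of_isUnit_bd3 h
  refine Matrix.inv_eq_right_inv ?_
  simp only [Matrix.isUnit_iff_isUnit_det] at h₁ h₂ h₃
  rw [bd3_mul_bd3, Matrix.mul_nonsing_inv _ h₁, Matrix.mul_nonsing_inv _ h₂,
    Matrix.mul_nonsing_inv _ h₃, bd3_one]

lemma inv_smul_one_sub_bd3 {c : ℂ} {D₁ D₂ D₃ : Matrix (Fin 2) (Fin 2) ℂ}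
    (h : IsUnit (c • (1 : Matrix (Fin 3 × Fin 2) (Fin 3 × Fin 2) ℂ) - bd3 D₁ D₂ D₃)) :
    (c • (1 : Matrix (Fin 3 × Fin 2) (Fin 3 × Fin 2) ℂ) - bd3 D₁ D₂ D₃)⁻¹
      = bd3 (c • 1 - D₁)⁻¹ (c • 1 - D₂)⁻¹ (c • 1 - D₃)⁻¹ := by
  rw [smul_one_sub_bd3] at h ⊢
  exact inv_bd3 h

section Recursion

variable {Ad1 Ad2 Ad3 Qam Qmc Qcm Qma : Matrix (Fin 2) (Fin 2) ℂ}

lemma inv_recursion_step_bd3 {c : ℂ} {B₁ B₂ B₃ : Matrix (Fin 2) (Fin 2) ℂ}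
    (h : IsUnit (c • (1 : Matrix (Fin 3 × Fin 2) (Fin 3 × Fin 2) ℂ) - bd3 Ad1 Ad2 Ad3
      - Aplus Qcm Qma * bd3 B₁ B₂ B₃ * Aminus Qam Qmc)) :
    (c • (1 : Matrix (Fin 3 × Fin 2) (Fin 3 × Fin 2) ℂ) - bd3 Ad1 Ad2 Ad3
      - Aplus Qcm Qma * bd3 B₁ B₂ B₃ * Aminus Qam Qmc)⁻¹
      = bd3 (c • 1 - Ad1)⁻¹ (c • 1 - Ad2 - Qcm * B₃ * Qmc)⁻¹
          (c • 1 - Ad3 - Qma * B₁ * Qam)⁻¹ := by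
  rw [Aplus_mul_bd3_mul_Aminus, sub_sub, bd3_add_bd3] at h ⊢
  simpa only [add_zero, sub_add_eq_sub_sub] using inv_smul_one_sub_bd3 h

lemma exists_bd3_of_recursion {N : ℕ} {c : ℕ → ℂ}
    {X : ℕ → Matrix (Fin 3 × Fin 2) (Fin 3 × Fin 2) ℂ}
    (hXN : X N = (c N • (1 : Matrix (Fin 3 × Fin 2) (Fin 3 × Fin 2) ℂ) - bd3 Ad1 Ad2 Ad3)⁻¹)
    (hXk : ∀ k < N, X k = (c k • (1 : Matrix (Fin 3 × Fin 2) (Fin 3 × Fin 2) ℂ)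
        - bd3 Ad1 Ad2 Ad3 - Aplus Qcm Qma * X (k + 1) * Aminus Qam Qmc)⁻¹)
    (hinvXN : IsUnit (c N • (1 : Matrix (Fin 3 × Fin 2) (Fin 3 × Fin 2) ℂ) - bd3 Ad1 Ad2 Ad3))
    (hinvXk : ∀ k < N, IsUnit (c k • (1 : Matrix (Fin 3 × Fin 2) (Fin 3 × Fin 2) ℂ)
        - bd3 Ad1 Ad2 Ad3 - Aplus Qcm Qma * X (k + 1) * Aminus Qam Qmc))
    {k : ℕ} (hk : k ≤ N) :
    ∃ B₂ B₃ : Matrix (Fin 2) (Fin 2) ℂ, X k = bd3 (c k • 1 - Ad1)⁻¹ B₂ B₃ := by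
  induction hk using Nat.decreasingInduction with
  | self => exact ⟨_, _, by rw [hXN, inv_smul_one_sub_bd3 hinvXN]⟩
  | of_succ k hk ih =>
    obtain ⟨B₂, B₃, hX⟩ := ih
    have hu := hinvXk k hk
    rw [hX] at hu
    exact ⟨_, _, by rw [hXk k hk, hX, inv_recursion_step_bd3 hu]⟩

lemma Aplus_mul_inv_recursion_step_mul_Aminus {c c' : ℂ}
    {Z : Matrix (Fin 3 × Fin 2) (Fin 3 × Fin 2) ℂ} {B₂ B₃ : Matrix (Fin 2) (Fin 2) ℂ}
    (hZ : Z = bd3 (c' • 1 - Ad1)⁻¹ B₂ B₃)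
    (h : IsUnit (c • (1 : Matrix (Fin 3 × Fin 2) (Fin 3 × Fin 2) ℂ) - bd3 Ad1 Ad2 Ad3
      - Aplus Qcm Qma * Z * Aminus Qam Qmc)) :
    Aplus Qcm Qma * (c • (1 : Matrix (Fin 3 × Fin 2) (Fin 3 × Fin 2) ℂ) - bd3 Ad1 Ad2 Ad3
      - Aplus Qcm Qma * Z * Aminus Qam Qmc)⁻¹ * Aminus Qam Qmc
      = bd3 0 (Qcm * (c • 1 - Ad3 - Qma * (c' • 1 - Ad1)⁻¹ * Qam)⁻¹ * Qmc)
          (Qma * (c • 1 - Ad1)⁻¹ * Qam) := by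
  subst hZ
  rw [inv_recursion_step_bd3 h, Aplus_mul_bd3_mul_Aminus]

end Recursion

/-- Independence of the truncation order: with N ≥ 2 sidebands, the first
diagonal 2×2 block of every X⁽ᵏ⁾ equals (cₖI₂ − A_d1)⁻¹ independently of N,
and Ξ⁽¹⁾ = A₊X⁽¹⁾A₋ computed with N sidebands equals that computed with 2. -/
theorem recursion_independent_of_N (N : ℕ) (hN : 2 ≤ N) (c : ℕ → ℂ)
    (Ad1 Ad2 Ad3 Qam Qmc Qcm Qma : Matrix (Fin 2) (Fin 2) ℂ)
    (X Y : ℕ → Matrix (Fin 3 × Fin 2) (Fin 3 × Fin 2) ℂ)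
    -- recursion with N sidebands
    (hXN : X N = (c N • (1 : Matrix (Fin 3 × Fin 2) (Fin 3 × Fin 2) ℂ)
        - bd3 Ad1 Ad2 Ad3)⁻¹)
    (hXk : ∀ k < N, X k = (c k • (1 : Matrix (Fin 3 × Fin 2) (Fin 3 × Fin 2) ℂ)
        - bd3 Ad1 Ad2 Ad3 - Aplus Qcm Qma * X (k + 1) * Aminus Qam Qmc)⁻¹)
    (hinvXN : IsUnit (c N • (1 : Matrix (Fin 3 × Fin 2) (Fin 3 × Fin 2) ℂ)
        - bd3 Ad1 Ad2 Ad3))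
    (hinvXk : ∀ k < N, IsUnit (c k • (1 : Matrix (Fin 3 × Fin 2) (Fin 3 × Fin 2) ℂ)
        - bd3 Ad1 Ad2 Ad3 - Aplus Qcm Qma * X (k + 1) * Aminus Qam Qmc))
    -- recursion with 2 sidebands
    (hY2 : Y 2 = (c 2 • (1 : Matrix (Fin 3 × Fin 2) (Fin 3 × Fin 2) ℂ)
        - bd3 Ad1 Ad2 Ad3)⁻¹)
    (hYk : ∀ k < 2, Y k = (c k • (1 : Matrix (Fin 3 × Fin 2) (Fin 3 × Fin 2) ℂ)
        - bd3 Ad1 Ad2 Ad3 - Aplus Qcm Qma * Y (k + 1) * Aminus Qam Qmc)⁻¹)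
    (hinvY2 : IsUnit (c 2 • (1 : Matrix (Fin 3 × Fin 2) (Fin 3 × Fin 2) ℂ)
        - bd3 Ad1 Ad2 Ad3))
    (hinvYk : ∀ k < 2, IsUnit (c k • (1 : Matrix (Fin 3 × Fin 2) (Fin 3 × Fin 2) ℂ)
        - bd3 Ad1 Ad2 Ad3 - Aplus Qcm Qma * Y (k + 1) * Aminus Qam Qmc)) :
    (∀ k, 1 ≤ k → k ≤ N →
        blk 0 0 (X k) = (c k • (1 : Matrix (Fin 2) (Fin 2) ℂ) - Ad1)⁻¹) ∧
    Aplus Qcm Qma * X 1 * Aminus Qam Qmc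
      = Aplus Qcm Qma * Y 1 * Aminus Qam Qmc := by
  have hX := fun k (hk : k ≤ N) => exists_bd3_of_recursion hXN hXk hinvXN hinvXk hk
  refine ⟨fun k _ hk => ?_, ?_⟩
  · obtain ⟨B₂, B₃, hXblk⟩ := hX k hk
    rw [hXblk]
    rfl
  · obtain ⟨B₂, B₃, hX₂⟩ := hX 2 hN
    obtain ⟨C₂, C₃, hY₂⟩ := exists_bd3_of_recursion hY2 hYk hinvY2 hinvYk le_rfl
    rw [hXk 1 (by omega), hYk 1 (by omega),
      Aplus_mul_inv_recursion_step_mul_Aminus hX₂ (hinvXk 1 (by omega)),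
      Aplus_mul_inv_recursion_step_mul_Aminus hY₂ (hinvYk 1 (by omega))]
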